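/- arXiv:1308.5618 — 5 statements merged into one kernel-verified Lean document; each statement's English description precedes it below -/
import Mathlib

section
/- Let F be a tree set. For every w ∈ F, every finite F-maximal suffix code U ⊆ F, and every finite F-maximal prefix code V ⊆ F, the generalized extension graph G_{U,V}(w) is a tree (connected and acyclic). -/
/-!
Write `A∩F` for the one-letter words of `F`, so that `G_{A∩F,A∩F}(w) = G(w)`. Fix `U` and
induct on the total length of the words of `V`. If `va` is a longest word of `V`, maximality
forces every `vb ∈ F` into `V`; replacing these words by `v` yields a smaller `F`-maximal
prefix code `V'`, and `G_{U,V}(w)` is `G_{U,V'}(w)` with the vertex `v` blown up into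
`G_{U,A∩F}(wv)`. Gluing a tree into a tree in place of a vertex gives a tree: connectivity
lifts along the contraction, and the count `#vertices = #edges + 1` is additive. So
`G_{U,A∩F}` being a tree everywhere implies `G_{U,V}` is. Applied to `U = A∩F` this gives
`G_{A∩F,V}`; reversing all words swaps prefix and suffix codes and the two sides of the graph,
and the same induction then replaces `A∩F` by `U`.
-/

open List

variable {A : Type*}

/-- The `n`-th power `wⁿ` of a word (concatenation). -/
def wordPow (w : List A) (n : ℕ) : List A := (List.replicate n w).flatten

/-- A set of words is factorial if it contains the factors of its elements. -/
def Factorial (F : Set (List A)) : Prop := ∀ ⦃u v : List A⦄, u ∈ F → v <:+: u → v ∈ F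

/-- A set of words is recurrent if it is factorial and any two of its words
occur in a common word of the set, in a prescribed order. -/
def Recurrent (F : Set (List A)) : Prop :=
  Factorial F ∧ ∀ u ∈ F, ∀ w ∈ F, ∃ v : List A, u ++ v ++ w ∈ F

/-- A set of words is uniformly recurrent if it is factorial, right-essential, and
every word of the set occurs in all long enough words of the set. -/
def UniformlyRecurrent (F : Set (List A)) : Prop :=
  Factorial F ∧ (∀ w ∈ F, ∃ a : A, w ++ [a] ∈ F) ∧
    ∀ u ∈ F, ∃ n ≥ 1, ∀ w ∈ F, w.length = n → u <:+: w

/-- A set of words is periodic if it is the set of factors of the powers of a single word. -/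
def Periodic (F : Set (List A)) : Prop :=
  ∃ w : List A, F = {v | ∃ n : ℕ, v <:+: wordPow w n}

/-- `L(w)`, the set of left extensions of `w` in `F`. -/
def LeftExt (F : Set (List A)) (w : List A) : Set A := {a | a :: w ∈ F}

/-- `R(w)`, the set of right extensions of `w` in `F`. -/
def RightExt (F : Set (List A)) (w : List A) : Set A := {a | w ++ [a] ∈ F}

/-- A word is left-special if it has at least two left extensions. -/
def LeftSpecial (F : Set (List A)) (w : List A) : Prop := 2 ≤ (LeftExt F w).ncard

/-- A word is right-special if it has at least two right extensions. -/
def RightSpecial (F : Set (List A)) (w : List A) : Prop := 2 ≤ (RightExt F w).ncard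

/-- A word is bispecial if it is both left-special and right-special. -/
def Bispecial (F : Set (List A)) (w : List A) : Prop := LeftSpecial F w ∧ RightSpecial F w

/-- A set of words is biessential if it is factorial and every one of its words is
biextendable. -/
def Biessential (F : Set (List A)) : Prop :=
  Factorial F ∧ ∀ w ∈ F, ∃ a b : A, a :: (w ++ [b]) ∈ F

/-- The bipartite (simple, undirected) graph on `α ⊕ β` induced by a relation
`E : α → β → Prop`. -/
def bipGraph {α β : Type*} (E : α → β → Prop) : SimpleGraph (α ⊕ β) where
  Adj x y := ∃ a b, E a b ∧ ((x = Sum.inl a ∧ y = Sum.inr b) ∨ (x = Sum.inr b ∧ y = Sum.inl a))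
  symm := by
    constructor
    rintro x y ⟨a, b, h, hc⟩
    exact ⟨a, b, h, by tauto⟩
  loopless := by
    constructor
    rintro x ⟨a, b, h, hc⟩
    rcases hc with ⟨h1, h2⟩ | ⟨h1, h2⟩ <;> simp_all

/-- The extension graph `G(w)` of a word `w`: the bipartite graph on
`L(w) ⊔ R(w)` with an edge between `a` and `b` iff `awb ∈ F`. -/
def extensionGraph (F : Set (List A)) (w : List A) :
    SimpleGraph ({a : A // a ∈ LeftExt F w} ⊕ {b : A // b ∈ RightExt F w}) :=
  bipGraph (fun a b => a.1 :: (w ++ [b.1]) ∈ F)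

/-- A tree set: a biessential set all of whose extension graphs are trees. -/
def IsTreeSet (F : Set (List A)) : Prop :=
  Biessential F ∧ ∀ w ∈ F, (extensionGraph F w).IsTree

/-- The generalized extension graph `G_{U,V}(w)`: the bipartite graph on
`U(w) ⊔ V(w)` with an edge between `ℓ` and `r` iff `ℓwr ∈ F`. -/
def genExtGraph (F : Set (List A)) (U V : Set (List A)) (w : List A) :
    SimpleGraph ({l : List A // l ∈ U ∧ l ++ w ∈ F} ⊕ {r : List A // r ∈ V ∧ w ++ r ∈ F}) :=
  bipGraph (fun l r => l.1 ++ w ++ r.1 ∈ F)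

/-- A prefix code: a set of nonempty words none of which is a proper prefix of another. -/
def IsPrefixCode (U : Set (List A)) : Prop :=
  (∀ u ∈ U, u ≠ []) ∧ ∀ u ∈ U, ∀ v ∈ U, u <+: v → u = v

/-- A suffix code: a set of nonempty words none of which is a proper suffix of another. -/
def IsSuffixCode (U : Set (List A)) : Prop :=
  (∀ u ∈ U, u ≠ []) ∧ ∀ u ∈ U, ∀ v ∈ U, u <:+ v → u = v

/-- An `S`-maximal prefix code: a prefix code contained in `S` and not properly contained
in any prefix code contained in `S`. -/
def IsMaximalPrefixCodeIn (S U : Set (List A)) : Prop :=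
  IsPrefixCode U ∧ U ⊆ S ∧ ∀ W, IsPrefixCode W → W ⊆ S → U ⊆ W → U = W

/-- An `S`-maximal suffix code. -/
def IsMaximalSuffixCodeIn (S U : Set (List A)) : Prop :=
  IsSuffixCode U ∧ U ⊆ S ∧ ∀ W, IsSuffixCode W → W ⊆ S → U ⊆ W → U = W

/-- `Γ_F(x)`, the set of right return words to `x` in `F`. -/
def ReturnWords (F : Set (List A)) (x : List A) : Set (List A) :=
  {r | r ≠ [] ∧ x ++ r ∈ F ∧ ∃ s : List A, s ≠ [] ∧ x ++ r = s ++ x}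

/-- `R_F(x) = Γ_F(x) \ Γ_F(x)A⁺`, the set of first right return words to `x` in `F`. -/
def FirstReturnWords (F : Set (List A)) (x : List A) : Set (List A) :=
  ReturnWords F x \ {r | ∃ r' ∈ ReturnWords F x, ∃ s : List A, s ≠ [] ∧ r = r' ++ s}

/-- The natural map from words to the free group. -/
def wordToFree (w : List A) : FreeGroup A := (w.map FreeGroup.of).prod

/-- `x` is unioccurrent in `y` if `x` occurs exactly once in `y`. -/
def Unioccurrent (x y : List A) : Prop := ∃! p : List A × List A, y = p.1 ++ x ++ p.2

/-- Vertices of the Rauzy graph `G_n`: words of `F` of length `n`. -/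
def RauzyVertex (F : Set (List A)) (n : ℕ) := {w : List A // w ∈ F ∧ w.length = n}

/-- Edges of the Rauzy graph `G_n`: an edge from `x` to `y` labeled `a` whenever
`xa ∈ F ∩ Ay`. -/
def RauzyEdge (F : Set (List A)) (n : ℕ) (x : RauzyVertex F n) (a : A)
    (y : RauzyVertex F n) : Prop :=
  x.1 ++ [a] ∈ F ∧ ∃ b : A, x.1 ++ [a] = b :: y.1

/-- `GenPathLabel E p q g` holds when there is a generalized path (a path which may
traverse edges forwards or backwards) from `p` to `q` in the `A`-labeled graph with
edge relation `E`, whose label (product of contributions in the free group) is `g`. -/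
inductive GenPathLabel {V : Type*} (E : V → A → V → Prop) : V → V → FreeGroup A → Prop
  | nil (v : V) : GenPathLabel E v v 1
  | fwd {p q r : V} {g : FreeGroup A} {a : A} :
      GenPathLabel E p q g → E q a r → GenPathLabel E p r (g * FreeGroup.of a)
  | bwd {p q r : V} {g : FreeGroup A} {a : A} :
      GenPathLabel E p q g → E r a q → GenPathLabel E p r (g * (FreeGroup.of a)⁻¹)

/-- A vertex of a Rauzy graph is special if the corresponding word is left-special
or right-special. -/
def SpecialWord (F : Set (List A)) (w : List A) : Prop := LeftSpecial F w ∨ RightSpecial F w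

/-- Nonempty directed paths in the Rauzy graph `G_n` all of whose intermediate
vertices are non-special, together with their labels. -/
inductive NSPath (F : Set (List A)) (n : ℕ) : RauzyVertex F n → RauzyVertex F n → List A → Prop
  | single {p q : RauzyVertex F n} {a : A} : RauzyEdge F n p a q → NSPath F n p q [a]
  | cons {p q r : RauzyVertex F n} {a : A} {l : List A} :
      RauzyEdge F n p a q → ¬ SpecialWord F q.1 → NSPath F n q r l → NSPath F n p r (a :: l)

/-- The Rauzy graph `G_n` is of the first infinite type with respect to the special
vertices `x, y` and the words `u, v, w, t`: `x` and `y` are the only special vertices and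
the simple directed paths between them with non-special intermediate vertices are exactly
`x → x` labeled `u`, `x → y` labeled `v`, `y → y` labeled `w` and `y → x` labeled `t`. -/
def FirstInfiniteType (F : Set (List A)) (n : ℕ) (x y : RauzyVertex F n)
    (u v w t : List A) : Prop :=
  x ≠ y ∧ SpecialWord F x.1 ∧ SpecialWord F y.1 ∧
    (∀ z : RauzyVertex F n, SpecialWord F z.1 → z = x ∨ z = y) ∧
    (∀ p q : RauzyVertex F n, (p = x ∨ p = y) → (q = x ∨ q = y) → ∀ l : List A,
      (NSPath F n p q l ↔ ((p = x ∧ q = x ∧ l = u) ∨ (p = x ∧ q = y ∧ l = v) ∨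
        (p = y ∧ q = y ∧ l = w) ∨ (p = y ∧ q = x ∧ l = t))))

open SimpleGraph

section BipartiteGraph

variable {α β γ α' β' : Type*}

@[simp] lemma bipGraph_adj_inl_inr (E : α → β → Prop) (a : α) (b : β) :
    (bipGraph E).Adj (.inl a) (.inr b) ↔ E a b := by
  simp [bipGraph]

@[simp] lemma bipGraph_adj_inr_inl (E : α → β → Prop) (a : α) (b : β) :
    (bipGraph E).Adj (.inr b) (.inl a) ↔ E a b := by
  simp [bipGraph]

@[simp] lemma bipGraph_not_adj_inl_inl (E : α → β → Prop) (a a' : α) :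
    ¬ (bipGraph E).Adj (.inl a) (.inl a') := by
  simp [bipGraph]

@[simp] lemma bipGraph_not_adj_inr_inr (E : α → β → Prop) (b b' : β) :
    ¬ (bipGraph E).Adj (.inr b) (.inr b') := by
  simp [bipGraph]

def bipGraphIso {E : α → β → Prop} {E' : α' → β' → Prop} (ea : α ≃ α') (eb : β ≃ β')
    (h : ∀ a b, E a b ↔ E' (ea a) (eb b)) : bipGraph E ≃g bipGraph E' where
  toEquiv := ea.sumCongr eb
  map_rel_iff' := by rintro (a | b) (a' | b') <;> simp [h]

def bipGraphSwapIso {E : α → β → Prop} {E' : β' → α' → Prop} (ea : α ≃ α') (eb : β ≃ β')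
    (h : ∀ a b, E a b ↔ E' (eb b) (ea a)) : bipGraph E ≃g bipGraph E' where
  toEquiv := (ea.sumCongr eb).trans (Equiv.sumComm α' β')
  map_rel_iff' := by rintro (a | b) (a' | b') <;> simp [h]

def bipGraphHom {E : α → β → Prop} {E' : α' → β' → Prop} (f : α → α') (g : β → β')
    (h : ∀ a b, E a b → E' (f a) (g b)) : bipGraph E →g bipGraph E' where
  toFun := Sum.map f g
  map_rel' := by
    rintro (a | b) (a' | b') hadj <;> simp_all

lemma card_edgeSet_bipGraph (E : α → β → Prop) :
    Nat.card (bipGraph E).edgeSet = Nat.card {p : α × β // E p.1 p.2} := by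
  refine (Nat.card_congr (Equiv.ofBijective
    (fun p => ⟨s(.inl p.1.1, .inr p.1.2), (bipGraph_adj_inl_inr E _ _).mpr p.2⟩) ⟨?_, ?_⟩)).symm
  · rintro ⟨⟨a, b⟩, _⟩ ⟨⟨a', b'⟩, _⟩ h
    have := congrArg Subtype.val h
    simp_all
  · rintro ⟨e, he⟩
    induction e with
    | h x y =>
      rcases x with a | b <;> rcases y with a' | b' <;> simp at he
      · exact ⟨⟨(a, b'), he⟩, rfl⟩
      · exact ⟨⟨(a', b), he⟩, by simp [Sym2.eq_swap]⟩

lemma card_edgeSet_bipGraph_sumElim [Finite α] [Finite β] [Finite γ] (N : α → γ → Prop)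
    (E : α → β → Prop) :
    Nat.card (bipGraph fun a => Sum.elim (N a) (E a)).edgeSet =
      Nat.card {p : α × γ // N p.1 p.2} + Nat.card {p : α × β // E p.1 p.2} := by
  rw [card_edgeSet_bipGraph, ← Nat.card_sum]
  refine Nat.card_congr (((Equiv.prodSumDistrib α γ β).subtypeEquiv ?_).trans
    (Equiv.subtypeSum (p := Sum.elim (fun q : α × γ => N q.1 q.2) (fun q : α × β => E q.1 q.2))))
  rintro ⟨a, c | b⟩ <;> rfl

lemma SimpleGraph.Preconnected.apply_eq_of_forall_adj {V X : Type*} {G : SimpleGraph V}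
    (hG : G.Preconnected) {f : V → X} (hf : ∀ u v, G.Adj u v → f u = f v) (u v : V) : f u = f v := by
  obtain ⟨p⟩ := hG u v
  induction p with
  | nil => rfl
  | cons h _ ih => exact (hf _ _ h).trans ih

end BipartiteGraph

section Gluing

variable {α β γ : Type*}

theorem bipGraph_sumElim_connected (N : α → γ → Prop) (E : α → β → Prop)
    (hT : (bipGraph fun a => Sum.elim (fun _ : Unit => ∃ c, N a c) (E a)).Connected)
    (hS : (bipGraph fun (a : {a // ∃ c, N a c}) c => N a c).Connected) :
    (bipGraph fun a => Sum.elim (N a) (E a)).Connected := by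
  set G := bipGraph fun a => Sum.elim (N a) (E a)
  let ψ : (bipGraph fun (a : {a // ∃ c, N a c}) c => N a c) →g G :=
    bipGraphHom Subtype.val Sum.inl fun _ _ h => h
  obtain ⟨z⟩ := hS.nonempty
  have hψ (x) : G.connectedComponentMk (ψ x) = G.connectedComponentMk (ψ z) :=
    ConnectedComponent.sound ((hS.preconnected x z).map ψ)
  -- `g` reads off the component of a vertex from its image in the contracted tree (`hg`);
  -- it is constant along the edges of that tree, hence constant
  let g : α ⊕ (Unit ⊕ β) → G.ConnectedComponent :=
    Sum.elim (fun a => G.connectedComponentMk (.inl a))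
      (Sum.elim (fun _ => G.connectedComponentMk (ψ z))
        (fun b => G.connectedComponentMk (.inr (.inr b))))
  have hg (x) : G.connectedComponentMk x = g (Sum.map id (Sum.map (fun _ => ()) id) x) := by
    rcases x with a | c | b
    exacts [rfl, hψ (.inr c), rfl]
  have hg_adj (a r) (h : Sum.elim (fun _ : Unit => ∃ c, N a c) (E a) r) :
      g (.inl a) = g (.inr r) := by
    rcases r with ⟨⟩ | b
    · obtain ⟨c, hc⟩ := h
      exact hψ (.inl ⟨a, c, hc⟩)
    · exact ConnectedComponent.sound (Adj.reachable (by simpa [G] using h))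
  have : Nonempty (α ⊕ (γ ⊕ β)) := ⟨ψ z⟩
  refine ⟨fun x y => ConnectedComponent.exact ?_⟩
  rw [hg, hg]
  refine Preconnected.apply_eq_of_forall_adj hT.preconnected ?_ _ _
  rintro _ _ ⟨a, r, h, ⟨rfl, rfl⟩ | ⟨rfl, rfl⟩⟩
  exacts [hg_adj a r h, (hg_adj a r h).symm]

/-- Replacing one vertex of a tree by a tree, attached along the neighbours of that vertex,
gives a tree: here `Unit` is the vertex blown up into the tree on `{a // ∃ c, N a c} ⊕ γ`. -/
theorem bipGraph_sumElim_isTree [Finite α] [Finite β] [Finite γ] (N : α → γ → Prop)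
    (E : α → β → Prop)
    (hT : (bipGraph fun a => Sum.elim (fun _ : Unit => ∃ c, N a c) (E a)).IsTree)
    (hS : (bipGraph fun (a : {a // ∃ c, N a c}) c => N a c).IsTree) :
    (bipGraph fun a => Sum.elim (N a) (E a)).IsTree := by
  rw [isTree_iff_connected_and_card] at hT hS ⊢
  refine ⟨bipGraph_sumElim_connected N E hT.1 hS.1, ?_⟩
  have hcontract : Nat.card {p : α × Unit // ∃ c, N p.1 c} = Nat.card {a // ∃ c, N a c} :=
    Nat.card_congr ((Equiv.prodPUnit α).subtypeEquiv fun _ => Iff.rfl)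
  have hblowup : Nat.card {p : {a // ∃ c, N a c} × γ // N p.1 p.2} =
      Nat.card {p : α × γ // N p.1 p.2} :=
    Nat.card_congr ⟨fun p => ⟨(p.1.1.1, p.1.2), p.2⟩,
      fun p => ⟨(⟨p.1.1, p.1.2, p.2⟩, p.1.2), p.2⟩, fun _ => rfl, fun _ => rfl⟩
  have hT' := hT.2
  have hS' := hS.2
  rw [card_edgeSet_bipGraph_sumElim, hcontract] at hT'
  rw [card_edgeSet_bipGraph, hblowup] at hS'
  rw [card_edgeSet_bipGraph_sumElim]
  simp only [Nat.card_sum, Nat.card_unique] at hT' hS' ⊢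
  omega

theorem bipGraph_isTree_of_contract [Finite α] [Finite β] (R : α → β → Prop)
    (p : β → Prop)
    (hT : (bipGraph fun a =>
      Sum.elim (fun _ : Unit => ∃ b : {b // p b}, R a b) (fun b : {b // ¬ p b} => R a b)).IsTree)
    (hS : (bipGraph fun (a : {a // ∃ b : {b // p b}, R a b}) (b : {b // p b}) => R a b).IsTree) :
    (bipGraph R).IsTree := by
  classical
  refine (bipGraphIso (.refl α) (Equiv.sumCompl p) ?_).isTree_iff.mp
    (bipGraph_sumElim_isTree (fun a (b : {b // p b}) => R a b) _ hT hS)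
  rintro a (b | b) <;> rfl

end Gluing

section Codes

variable {F S V W : Set (List A)}

lemma Factorial.mem_of_prefix (hF : Factorial F) {x y : List A} (hx : x ∈ F) (h : y <+: x) :
    y ∈ F :=
  hF hx h.isInfix

lemma Factorial.mem_of_suffix (hF : Factorial F) {x y : List A} (hx : x ∈ F) (h : y <:+ x) :
    y ∈ F :=
  hF hx h.isInfix

lemma Biessential.exists_append_singleton_mem (hF : Biessential F) {x : List A} (hx : x ∈ F) :
    ∃ b, x ++ [b] ∈ F := by
  obtain ⟨a, b, h⟩ := hF.2 x hx
  exact ⟨b, hF.1.mem_of_suffix h (suffix_cons a _)⟩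

/-- `A ∩ F`, the one-letter words of `F`. -/
def letterWords (F : Set (List A)) : Set (List A) := {x ∈ F | x.length = 1}

lemma IsPrefixCode.eq_of_prefix_or (hW : IsPrefixCode W) {x y : List A} (hx : x ∈ W)
    (hy : y ∈ W) (h : x <+: y ∨ y <+: x) : x = y :=
  h.elim (hW.2 x hx y hy) fun h => (hW.2 y hy x hx h).symm

lemma IsPrefixCode.not_prefix_of_append_singleton_mem (hV : IsPrefixCode V) {v : List A}
    {a : A} (hvV : v ++ [a] ∈ V) {y : List A} (hy : y ∈ V) : ¬ y <+: v := fun h => by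
  have := (hV.2 y hy _ hvV (h.trans (prefix_append _ _))).symm ▸ h.length_le
  simp at this

lemma IsMaximalPrefixCodeIn.exists_prefix_or (hV : IsMaximalPrefixCodeIn S V) {x : List A}
    (hxS : x ∈ S) (hx : x ≠ []) : ∃ y ∈ V, x <+: y ∨ y <+: x := by
  by_contra! hcomp
  have hcode : IsPrefixCode (insert x V) := by
    refine ⟨fun u hu => hu.elim (· ▸ hx) (hV.1.1 u), ?_⟩
    rintro u (rfl | hu) y (rfl | hy) h
    exacts [rfl, absurd h (hcomp y hy).1, absurd h (hcomp u hu).2, hV.1.2 u hu y hy h]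
  have hxV : x ∈ V :=
    hV.2.2 _ hcode (Set.insert_subset hxS hV.2.1) (Set.subset_insert _ _) ▸ Set.mem_insert x V
  exact (hcomp x hxV).1 (prefix_refl x)

lemma isPrefixCode_letterWords : IsPrefixCode (letterWords F) :=
  ⟨fun _ hx => ne_nil_of_length_eq_add_one hx.2,
    fun _ hx _ hy h => h.eq_of_length (hx.2.trans hy.2.symm)⟩

lemma IsMaximalPrefixCodeIn.eq_letterWords (hV : IsMaximalPrefixCodeIn F V)
    (hshort : ∀ x ∈ V, x.length ≤ 1) : V = letterWords F :=
  hV.2.2 _ isPrefixCode_letterWords (fun _ hx => hx.1) fun x hx =>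
    ⟨hV.2.1 hx, le_antisymm (hshort x hx) (length_pos_iff.mpr (hV.1.1 x hx))⟩

lemma IsMaximalPrefixCodeIn.letterWords_finite (hV : IsMaximalPrefixCodeIn F V)
    (hVfin : V.Finite) : (letterWords F).Finite := by
  refine (hVfin.image (take 1)).subset fun x hx => ?_
  obtain ⟨y, hy, hxy | hyx⟩ := hV.exists_prefix_or hx.1 (ne_nil_of_length_eq_add_one hx.2)
  · exact ⟨y, hy, (hx.2 ▸ prefix_iff_eq_take.mp hxy).symm⟩
  · have hyx : y = x := hyx.eq_of_length (le_antisymm hyx.length_le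
      (hx.2 ▸ length_pos_iff.mpr (hV.1.1 y hy)))
    exact ⟨y, hy, by rw [hyx, take_of_length_le hx.2.le]⟩

noncomputable def extensionGraphIso (hF : Factorial F) (w : List A) :
    extensionGraph F w ≃g genExtGraph F (letterWords F) (letterWords F) w := by
  refine bipGraphIso
    (Equiv.ofBijective
      (fun a => ⟨[a.1], ⟨hF.mem_of_prefix a.2 ⟨w, rfl⟩, rfl⟩, a.2⟩) ⟨?_, ?_⟩)
    (Equiv.ofBijective
      (fun b => ⟨[b.1], ⟨hF.mem_of_suffix b.2 (suffix_append w _), rfl⟩, b.2⟩) ⟨?_, ?_⟩)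
    fun _ _ => Iff.rfl
  · exact fun a a' h => Subtype.ext (by simpa using congrArg Subtype.val h)
  · rintro ⟨l, ⟨-, hl⟩, hlw⟩
    obtain ⟨c, rfl⟩ := length_eq_one_iff.mp hl
    exact ⟨⟨c, hlw⟩, rfl⟩
  · exact fun b b' h => Subtype.ext (by simpa using congrArg Subtype.val h)
  · rintro ⟨r, ⟨-, hr⟩, hwr⟩
    obtain ⟨c, rfl⟩ := length_eq_one_iff.mp hr
    exact ⟨⟨c, hwr⟩, rfl⟩

end Codes

section PrefixReduce

variable {F V : Set (List A)} {v : List A} {a : A}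

/-- The prefix code obtained from `V` by replacing all the words `v b ∈ V` by `v`. -/
def prefixReduce (V : Set (List A)) (v : List A) : Set (List A) := insert v {x ∈ V | ¬ v <+: x}

lemma mem_prefixReduce {x : List A} : x ∈ prefixReduce V v ↔ x = v ∨ x ∈ V ∧ ¬ v <+: x :=
  Iff.rfl

lemma IsMaximalPrefixCodeIn.mem_iff_of_longest (hV : IsMaximalPrefixCodeIn F V)
    (hvV : v ++ [a] ∈ V) (hmax : ∀ x ∈ V, x.length ≤ v.length + 1) {x : List A}
    (hvx : v <+: x) : x ∈ V ↔ x ∈ F ∧ x.length = v.length + 1 := by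
  have long {y} (hy : y ∈ V) (hvy : v <+: y) : y.length = v.length + 1 := by
    obtain ⟨t, rfl⟩ := hvy
    have ht : t ≠ [] := by
      rintro rfl
      exact hV.1.not_prefix_of_append_singleton_mem hvV (by simpa using hy) (prefix_refl v)
    have := hmax _ hy
    have := length_pos_iff.mpr ht
    simp only [length_append] at *
    omega
  refine ⟨fun hx => ⟨hV.2.1 hx, long hx hvx⟩, fun ⟨hxF, hlen⟩ => ?_⟩
  obtain ⟨y, hy, hxy | hyx⟩ := hV.exists_prefix_or hxF (ne_nil_of_length_eq_add_one hlen)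
  · exact hxy.eq_of_length (le_antisymm hxy.length_le (hlen ▸ hmax y hy)) ▸ hy
  · rcases prefix_or_prefix_of_prefix hyx hvx with hyv | hvy
    · exact absurd hyv (hV.1.not_prefix_of_append_singleton_mem hvV hy)
    · exact hyx.eq_of_length ((long hy hvy).trans hlen.symm) ▸ hy

lemma isMaximalPrefixCodeIn_prefixReduce (hF : Factorial F) (hV : IsMaximalPrefixCodeIn F V)
    (hvV : v ++ [a] ∈ V) (hv : v ≠ []) : IsMaximalPrefixCodeIn F (prefixReduce V v) := by
  have hcode : IsPrefixCode (prefixReduce V v) := by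
    refine ⟨fun u hu => hu.elim (· ▸ hv) fun hu => hV.1.1 u hu.1, ?_⟩
    rintro x (rfl | ⟨hx, -⟩) y (rfl | ⟨hy, hvy⟩) h
    exacts [rfl, absurd h hvy, absurd h (hV.1.not_prefix_of_append_singleton_mem hvV hx),
      hV.1.2 x hx y hy h]
  refine ⟨hcode, Set.insert_subset (hF.mem_of_prefix (hV.2.1 hvV) (prefix_append _ _))
    fun x hx => hV.2.1 hx.1, fun W hW hWF hsub => ?_⟩
  refine (Set.Subset.antisymm hsub fun x hx => ?_)
  have hvW : v ∈ W := hsub (Set.mem_insert v _)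
  by_cases hvx : v <+: x
  · exact .inl (hW.2 v hvW x hx hvx).symm
  obtain ⟨y, hy, hxy⟩ := hV.exists_prefix_or (hWF hx) (hW.1 x hx)
  by_cases hvy : v <+: y
  · exfalso
    rcases hxy with hxy | hyx
    · rcases prefix_or_prefix_of_prefix hxy hvy with hxv | hvx'
      · exact hvx (hW.2 x hx v hvW hxv ▸ prefix_refl x)
      · exact hvx hvx'
    · exact hvx (hvy.trans hyx)
  · have hyW : y ∈ W := hsub (.inr ⟨hy, hvy⟩)
    exact .inr ⟨hW.eq_of_prefix_or hx hyW hxy ▸ hy, hvx⟩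

lemma sum_length_prefixReduce_lt [DecidableEq A] (s : Finset (List A)) (hvs : v ++ [a] ∈ s) :
    ∑ x ∈ insert v {x ∈ s | ¬ v <+: x}, x.length < ∑ x ∈ s, x.length := by
  rw [Finset.sum_insert (by simp), ← Finset.sum_filter_not_add_sum_filter s (v <+: ·)]
  have : (v ++ [a]).length ≤ ∑ x ∈ s with v <+: x, x.length :=
    Finset.single_le_sum (by simp) (Finset.mem_filter.mpr ⟨hvs, prefix_append _ _⟩)
  simp only [length_append, length_singleton] at this
  omega

end PrefixReduce

section PrefixReduceStep

variable {F U V : Set (List A)} {w v : List A} {a : A}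

/-- `U(w)`, the left vertices of `G_{U,V}(w)`. -/
abbrev LeftVert (F U : Set (List A)) (w : List A) : Type _ :=
  {l : List A // l ∈ U ∧ l ++ w ∈ F}

/-- `V(w)`, the right vertices of `G_{U,V}(w)`. -/
abbrev RightVert (F V : Set (List A)) (w : List A) : Type _ :=
  {r : List A // r ∈ V ∧ w ++ r ∈ F}

lemma IsMaximalPrefixCodeIn.exists_extension_mem_iff (hF : Biessential F)
    (hV : IsMaximalPrefixCodeIn F V) (hvV : v ++ [a] ∈ V)
    (hmax : ∀ x ∈ V, x.length ≤ v.length + 1) (l : List A) :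
    (∃ r : {r : RightVert F V w // v <+: r.1}, l ++ w ++ r.1.1 ∈ F) ↔ l ++ w ++ v ∈ F := by
  constructor
  · rintro ⟨⟨⟨r, _⟩, hvr⟩, h⟩
    exact hF.1.mem_of_prefix h ((prefix_append_right_inj _).mpr hvr)
  · intro h
    obtain ⟨b, hb⟩ := hF.exists_append_singleton_mem h
    have hbV : v ++ [b] ∈ V := (hV.mem_iff_of_longest hvV hmax (prefix_append _ _)).mpr
      ⟨hF.1.mem_of_suffix hb (by simpa using suffix_append (l ++ w) (v ++ [b])), by simp⟩
    exact ⟨⟨⟨v ++ [b], hbV, hF.1.mem_of_suffix hb (by simp)⟩, prefix_append _ _⟩,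
      by simpa using hb⟩

lemma mem_prefixReduce_and_iff (hF : Factorial F) (hwv : w ++ v ∉ F) (r : List A) :
    r ∈ prefixReduce V v ∧ w ++ r ∈ F ↔ r ∈ V ∧ w ++ r ∈ F := by
  simp only [mem_prefixReduce]
  refine ⟨fun ⟨hr, hwr⟩ => ⟨(hr.resolve_left (by rintro rfl; exact hwv hwr)).1, hwr⟩,
    fun ⟨hr, hwr⟩ => ⟨.inr ⟨hr, fun hvr => hwv ?_⟩, hwr⟩⟩
  exact hF.mem_of_prefix hwr ((prefix_append_right_inj w).mpr hvr)

/-- `G_{U,V'}(w)`, for `V'` the reduced code, is `G_{U,V}(w)` with the right vertices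
`v b` contracted to the single vertex `v`. -/
lemma isTree_contract_of_prefixReduce (hF : Biessential F) (hV : IsMaximalPrefixCodeIn F V)
    (hvV : v ++ [a] ∈ V) (hmax : ∀ x ∈ V, x.length ≤ v.length + 1) (hwv : w ++ v ∈ F)
    (hT : (genExtGraph F U (prefixReduce V v) w).IsTree) :
    (bipGraph fun l : LeftVert F U w =>
      Sum.elim (fun _ : Unit => ∃ r : {r : RightVert F V w // v <+: r.1}, l.1 ++ w ++ r.1.1 ∈ F)
        (fun r : {r : RightVert F V w // ¬ v <+: r.1} => l.1 ++ w ++ r.1.1 ∈ F)).IsTree := by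
  refine (bipGraphIso (.refl _) (Equiv.ofBijective (Sum.elim (fun _ => ⟨v, .inl rfl, hwv⟩)
    fun r => ⟨r.1.1, .inr ⟨r.1.2.1, r.2⟩, r.1.2.2⟩) ⟨?_, ?_⟩) ?_).isTree_iff.mpr hT
  · rintro (⟨⟩ | r) (⟨⟩ | r') h
    · rfl
    · exact absurd (congrArg Subtype.val h ▸ prefix_refl v) r'.2
    · exact absurd (congrArg Subtype.val h ▸ prefix_refl v) r.2
    · simp only [Sum.elim_inr, Subtype.mk.injEq] at h
      exact congrArg Sum.inr (Subtype.ext (Subtype.ext h))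
  · rintro ⟨r, rfl | ⟨hr, hvr⟩, hwr⟩
    exacts [⟨.inl (), rfl⟩, ⟨.inr ⟨⟨r, hr, hwr⟩, hvr⟩, rfl⟩]
  · rintro l (⟨⟩ | r)
    exacts [hV.exists_extension_mem_iff hF hvV hmax l.1, Iff.rfl]

/-- The part of `G_{U,V}(w)` around the right vertices `v b` is `G_{U,A∩F}(wv)`. -/
lemma isTree_blowup_of_prefixReduce (hF : Biessential F) (hV : IsMaximalPrefixCodeIn F V)
    (hvV : v ++ [a] ∈ V) (hmax : ∀ x ∈ V, x.length ≤ v.length + 1)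
    (hS : (genExtGraph F U (letterWords F) (w ++ v)).IsTree) :
    (bipGraph fun (l : {l : LeftVert F U w //
        ∃ r : {r : RightVert F V w // v <+: r.1}, l.1 ++ w ++ r.1.1 ∈ F})
      (r : {r : RightVert F V w // v <+: r.1}) => l.1.1 ++ w ++ r.1.1 ∈ F).IsTree := by
  have hN := hV.exists_extension_mem_iff (w := w) hF hvV hmax
  have hU (l : List A) : l ++ (w ++ v) ∈ F ↔ l ++ w ++ v ∈ F := by rw [append_assoc]
  have hvr (r : RightVert F (letterWords F) (w ++ v)) : v ++ r.1 ∈ V :=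
    (hV.mem_iff_of_longest hvV hmax (prefix_append _ _)).mpr
      ⟨hF.1.mem_of_suffix r.2.2 (by simp), by simp [r.2.1.2]⟩
  refine (bipGraphIso
    ⟨fun l => ⟨⟨l.1, l.2.1, hF.1.mem_of_prefix l.2.2 (by simp)⟩,
        (hN l.1).mpr ((hU l.1).mp l.2.2)⟩,
      fun l => ⟨l.1.1, l.1.2.1, (hU l.1.1).mpr ((hN l.1.1).mp l.2)⟩,
      fun _ => rfl, fun _ => rfl⟩
    (Equiv.ofBijective
      (fun r => ⟨⟨v ++ r.1, hvr r, by simpa using r.2.2⟩, prefix_append _ _⟩)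
      ⟨fun r r' h => Subtype.ext (append_cancel_left (congrArg (·.1.1) h)), ?_⟩)
    ?_).isTree_iff.mp hS
  · rintro ⟨⟨x, hxV, hwx⟩, hvx⟩
    obtain ⟨t, rfl⟩ := id hvx
    have ht := (hV.mem_iff_of_longest hvV hmax hvx).mp hxV
    exact ⟨⟨t, ⟨hF.1.mem_of_suffix ht.1 (suffix_append _ _), by simpa using ht.2⟩,
      by simpa using hwx⟩, rfl⟩
  · intro l r
    simp only [append_assoc]
    rfl

lemma genExtGraph_isTree_of_prefixReduce (hF : Biessential F) (hUfin : U.Finite)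
    (hVfin : V.Finite) (hV : IsMaximalPrefixCodeIn F V) (hvV : v ++ [a] ∈ V)
    (hmax : ∀ x ∈ V, x.length ≤ v.length + 1)
    (hT : (genExtGraph F U (prefixReduce V v) w).IsTree)
    (hS : w ++ v ∈ F → (genExtGraph F U (letterWords F) (w ++ v)).IsTree) :
    (genExtGraph F U V w).IsTree := by
  by_cases hwv : w ++ v ∈ F
  · have : Finite U := hUfin.to_subtype
    have : Finite V := hVfin.to_subtype
    have : Finite (LeftVert F U w) := Finite.Set.subset U fun _ h => h.1
    have : Finite (RightVert F V w) := Finite.Set.subset V fun _ h => h.1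
    exact bipGraph_isTree_of_contract _ (fun r : RightVert F V w => v <+: r.1)
      (isTree_contract_of_prefixReduce hF hV hvV hmax hwv hT)
      (isTree_blowup_of_prefixReduce hF hV hvV hmax (hS hwv))
  · exact (bipGraphIso (.refl _) (Equiv.subtypeEquivRight (mem_prefixReduce_and_iff hF.1 hwv))
      fun _ _ => Iff.rfl : genExtGraph F U (prefixReduce V v) w ≃g _).isTree_iff.mp hT

end PrefixReduceStep

section Induction

variable {F U : Set (List A)}

theorem genExtGraph_isTree_of_finset (hF : Biessential F) (hUfin : U.Finite)
    (hUL : ∀ w ∈ F, (genExtGraph F U (letterWords F) w).IsTree) (s : Finset (List A))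
    (hs : IsMaximalPrefixCodeIn F ↑s) {w : List A} (hw : w ∈ F) :
    (genExtGraph F U ↑s w).IsTree := by
  by_cases hshort : ∀ x ∈ s, x.length ≤ 1
  · rw [hs.eq_letterWords (by simpa using hshort)]
    exact hUL w hw
  obtain ⟨y, hys, hy⟩ : ∃ y ∈ s, 1 < y.length := by simpa using hshort
  obtain ⟨x, hxs, hxmax⟩ := s.exists_max_image length ⟨y, hys⟩
  have hx := (hxmax y hys).trans_lt' hy
  obtain ⟨v, a, rfl⟩ : ∃ v a, x = v ++ [a] :=
    (eq_nil_or_concat' x).resolve_left (by rintro rfl; simp at hx)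
  have hv : v ≠ [] := by rintro rfl; simp at hx
  classical
  have hcoe : (↑(insert v {x ∈ s | ¬ v <+: x}) : Set (List A)) = prefixReduce ↑s v := by
    ext
    simp [mem_prefixReduce]
  have := sum_length_prefixReduce_lt s hxs
  refine genExtGraph_isTree_of_prefixReduce hF hUfin s.finite_toSet hs hxs
    (fun x hx => by simpa using hxmax x hx) ?_ fun hwv => hUL _ hwv
  rw [← hcoe]
  exact genExtGraph_isTree_of_finset hF hUfin hUL _
    (hcoe ▸ isMaximalPrefixCodeIn_prefixReduce hF.1 hs hxs hv) hw
termination_by s.sum length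
decreasing_by simpa using this

theorem genExtGraph_isTree_of_letterWords (hF : Biessential F) (hUfin : U.Finite)
    (hUL : ∀ w ∈ F, (genExtGraph F U (letterWords F) w).IsTree) {V : Set (List A)}
    (hVfin : V.Finite) (hV : IsMaximalPrefixCodeIn F V) {w : List A} (hw : w ∈ F) :
    (genExtGraph F U V w).IsTree := by
  obtain ⟨s, rfl⟩ := hVfin.exists_finset_coe
  exact genExtGraph_isTree_of_finset hF hUfin hUL s hV hw

end Induction

section Reversal

variable {F U V W : Set (List A)}

lemma Biessential.reverse (hF : Biessential F) : Biessential (reverse ⁻¹' F) := by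
  refine ⟨fun u v hu h => hF.1 hu (reverse_infix.mpr h), fun w hw => ?_⟩
  obtain ⟨a, b, h⟩ := hF.2 _ hw
  exact ⟨b, a, by simpa using h⟩

lemma isPrefixCode_preimage_reverse : IsPrefixCode (reverse ⁻¹' W) ↔ IsSuffixCode W := by
  refine ⟨fun ⟨hne, hpre⟩ => ⟨fun u hu => ?_, fun u hu v hv h => ?_⟩,
    fun ⟨hne, hsuf⟩ => ⟨fun u hu => ?_, fun u hu v hv h => ?_⟩⟩
  · simpa using hne u.reverse (by simpa using hu)
  · simpa using hpre u.reverse (by simpa using hu) v.reverse (by simpa using hv)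
      (reverse_prefix.mpr h)
  · simpa using hne _ hu
  · exact reverse_injective (hsuf _ hu _ hv (reverse_suffix.mpr h))

lemma IsMaximalSuffixCodeIn.reverse (hU : IsMaximalSuffixCodeIn F U) :
    IsMaximalPrefixCodeIn (List.reverse ⁻¹' F) (List.reverse ⁻¹' U) := by
  refine ⟨isPrefixCode_preimage_reverse.mpr hU.1, Set.preimage_mono hU.2.1,
    fun W hW hWF hUW => ?_⟩
  have hinv : List.reverse ⁻¹' (List.reverse ⁻¹' W) = W := by ext; simp
  rw [hU.2.2 (List.reverse ⁻¹' W) (isPrefixCode_preimage_reverse.mp (hinv.symm ▸ hW))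
    (fun x hx => by simpa using hWF hx) (fun x hx => hUW (by simpa using hx)), hinv]

lemma letterWords_preimage_reverse :
    letterWords (reverse ⁻¹' F) = reverse ⁻¹' letterWords F := by
  ext
  simp [letterWords]

def genExtGraphReverseIso (F U V : Set (List A)) (w : List A) :
    genExtGraph F U V w ≃g
      genExtGraph (reverse ⁻¹' F) (reverse ⁻¹' V) (reverse ⁻¹' U) w.reverse :=
  bipGraphSwapIso ((reverse_involutive.toPerm _).subtypeEquiv fun _ => by simp)
    ((reverse_involutive.toPerm _).subtypeEquiv fun _ => by simp) fun _ _ => by simp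

end Reversal

/-- In a tree set `F`, for every `w ∈ F`, every finite `F`-maximal suffix code `U` and
every finite `F`-maximal prefix code `V`, the generalized extension graph `G_{U,V}(w)`
is a tree. -/
theorem genExtGraph_isTree (F : Set (List A)) (hF : IsTreeSet F) (w : List A) (hw : w ∈ F)
    (U V : Set (List A)) (hUfin : U.Finite) (hU : IsMaximalSuffixCodeIn F U)
    (hVfin : V.Finite) (hV : IsMaximalPrefixCodeIn F V) :
    (genExtGraph F U V w).IsTree := by
  have hLL (x) (hx : x ∈ F) : (genExtGraph F (letterWords F) (letterWords F) x).IsTree :=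
    (extensionGraphIso hF.1.1 x).isTree_iff.mp (hF.2 x hx)
  have hLV (x) (hx : x ∈ F) : (genExtGraph F (letterWords F) V x).IsTree :=
    genExtGraph_isTree_of_letterWords hF.1 (hV.letterWords_finite hVfin) hLL hVfin hV hx
  refine (genExtGraphReverseIso F U V w).isTree_iff.mpr
    (genExtGraph_isTree_of_letterWords hF.1.reverse
      (hVfin.preimage reverse_injective.injOn) (fun x hx => ?_)
      (hUfin.preimage reverse_injective.injOn) hU.reverse (by simpa using hw))
  rw [letterWords_preimage_reverse, ← reverse_reverse x]
  exact (genExtGraphReverseIso F (letterWords F) V x.reverse).isTree_iff.mp (hLV _ hx)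
end

section
/- Let F be a tree set over A with A ⊆ F. For every n ≥ 0 and every vertex v of the Rauzy graph G_n of F, the group defined by G_n with respect to v is the whole free group on A. -/
open List

variable {A : Type*}

/-!
`G_0` is a bouquet of loops, one for each letter, so its group is everything. Every
generalized path of `G_n` lifts, with the same label, to `G_{n+1}` between any vertices
`aW`, `a'W'` over its ends: an edge `Q --a--> R` lifts to `cQ --a--> Qa` because `F` is
biessential, and two vertices `aw`, `a'w` over the same `w` are joined by a path of trivial
label that follows a walk in the connected extension graph `G(w)`, each step `a — b — a'`
reading `aw --b--> wb <--b-- a'w`.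
-/

namespace GenPathLabel

variable {V : Type*} {E : V → A → V → Prop}

theorem trans {p q r : V} {g h : FreeGroup A} (hpq : GenPathLabel E p q g)
    (hqr : GenPathLabel E q r h) : GenPathLabel E p r (g * h) := by
  induction hqr with
  | nil => simpa using hpq
  | fwd _ e ih => rw [← mul_assoc]; exact ih.fwd e
  | bwd _ e ih => rw [← mul_assoc]; exact ih.bwd e

theorem of_forall_loop {v : V} (hloop : ∀ a, E v a v) (g : FreeGroup A) :
    GenPathLabel E v v g := by
  induction g using FreeGroup.induction_on with
  | C1 => exact nil v
  | of a => simpa using (nil v).fwd (hloop a)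
  | inv_of a _ => simpa using (nil v).bwd (hloop a)
  | mul g h hg hh => exact hg.trans hh

end GenPathLabel

theorem rauzyEdge_zero_loop {F : Set (List A)} (hAF : ∀ a : A, [a] ∈ F) (v : RauzyVertex F 0)
    (a : A) : RauzyEdge F 0 v a v := by
  obtain ⟨w, -, hw⟩ := v
  obtain rfl : w = [] := List.eq_nil_of_length_eq_zero hw
  exact ⟨hAF a, a, rfl⟩

section ExtensionGraph

variable {F : Set (List A)} {w : List A} {n : ℕ}

def extensionGraphToRauzy (hw : w.length = n) :
    ({a : A // a ∈ LeftExt F w} ⊕ {b : A // b ∈ RightExt F w}) → RauzyVertex F (n + 1) :=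
  Sum.elim (fun a => ⟨a.1 :: w, a.2, by simp [hw]⟩) (fun b => ⟨w ++ [b.1], b.2, by simp [hw]⟩)

/-- With these weights, a walk in `G(w)` becomes a generalized path whose label is the
quotient of the weights of its ends. -/
def extensionGraphWeight :
    ({a : A // a ∈ LeftExt F w} ⊕ {b : A // b ∈ RightExt F w}) → FreeGroup A :=
  Sum.elim (fun _ => 1) (fun b => FreeGroup.of b.1)

theorem genPathLabel_of_extensionGraph_adj (hw : w.length = n) {x y}
    (hxy : (extensionGraph F w).Adj x y) :
    GenPathLabel (RauzyEdge F (n + 1)) (extensionGraphToRauzy hw x) (extensionGraphToRauzy hw y)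
      ((extensionGraphWeight x)⁻¹ * extensionGraphWeight y) := by
  obtain ⟨a, b, hab, ⟨rfl, rfl⟩ | ⟨rfl, rfl⟩⟩ := hxy
  · have e : RauzyEdge F (n + 1) (extensionGraphToRauzy hw (.inl a)) b.1
        (extensionGraphToRauzy hw (.inr b)) := ⟨hab, a.1, rfl⟩
    simpa [extensionGraphWeight] using (GenPathLabel.nil _).fwd e
  · have e : RauzyEdge F (n + 1) (extensionGraphToRauzy hw (.inl a)) b.1
        (extensionGraphToRauzy hw (.inr b)) := ⟨hab, a.1, rfl⟩
    simpa [extensionGraphWeight] using (GenPathLabel.nil _).bwd e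

theorem genPathLabel_of_extensionGraph_reachable (hw : w.length = n) {x y}
    (hxy : (extensionGraph F w).Reachable x y) :
    GenPathLabel (RauzyEdge F (n + 1)) (extensionGraphToRauzy hw x) (extensionGraphToRauzy hw y)
      ((extensionGraphWeight x)⁻¹ * extensionGraphWeight y) := by
  rw [SimpleGraph.reachable_iff_reflTransGen] at hxy
  induction hxy with
  | refl => simpa using GenPathLabel.nil _
  | tail _ hadj ih =>
    simpa [mul_assoc] using ih.trans (genPathLabel_of_extensionGraph_adj hw hadj)

theorem exists_extensionGraphToRauzy_inl_eq (hw : w.length = n) :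
    ∀ p : RauzyVertex F (n + 1), p.1.tail = w → ∃ a, extensionGraphToRauzy hw (.inl a) = p := by
  rintro ⟨_ | ⟨a, u⟩, hpF, hplen⟩ hp
  · simp at hplen
  · obtain rfl : u = w := hp
    exact ⟨⟨a, hpF⟩, rfl⟩

theorem genPathLabel_one_of_tail_eq (hconn : (extensionGraph F w).Preconnected)
    {p q : RauzyVertex F (n + 1)} (hp : p.1.tail = w) (hq : q.1.tail = w) :
    GenPathLabel (RauzyEdge F (n + 1)) p q 1 := by
  have hw : w.length = n := by simp [← hp, p.2.2]
  obtain ⟨a, rfl⟩ := exists_extensionGraphToRauzy_inl_eq hw p hp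
  obtain ⟨b, rfl⟩ := exists_extensionGraphToRauzy_inl_eq hw q hq
  convert genPathLabel_of_extensionGraph_reachable hw (hconn (.inl a) (.inl b))
  simp [extensionGraphWeight]

end ExtensionGraph

section Lift

variable {F : Set (List A)} {n : ℕ}

theorem RauzyEdge.exists_lift (hF : Biessential F) {Q R : RauzyVertex F n} {a : A}
    (e : RauzyEdge F n Q a R) :
    ∃ P P' : RauzyVertex F (n + 1), P.1.tail = Q.1 ∧ P'.1.tail = R.1 ∧
      RauzyEdge F (n + 1) P a P' := by
  obtain ⟨hQa, b, hb⟩ := e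
  obtain ⟨c, d, hcd⟩ := hF.2 _ hQa
  have hc : c :: (Q.1 ++ [a]) ∈ F := hF.1 hcd ⟨[], [d], by simp⟩
  refine ⟨⟨c :: Q.1, hF.1 hc ⟨[], [a], by simp⟩, by simp [Q.2.2]⟩,
    ⟨Q.1 ++ [a], hQa, by simp [Q.2.2]⟩, rfl, by simp [hb], hc, c, rfl⟩

theorem GenPathLabel.lift (hF : Biessential F)
    (hconn : ∀ w ∈ F, (extensionGraph F w).Preconnected)
    {W W' : RauzyVertex F n} {g : FreeGroup A} (h : GenPathLabel (RauzyEdge F n) W W' g)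
    {p q : RauzyVertex F (n + 1)} (hp : p.1.tail = W.1) (hq : q.1.tail = W'.1) :
    GenPathLabel (RauzyEdge F (n + 1)) p q g := by
  induction h generalizing q with
  | nil => exact genPathLabel_one_of_tail_eq (hconn _ W.2.1) hp hq
  | @fwd _ R _ _ _ e ih =>
    obtain ⟨P, P', hP, hP', e'⟩ := e.exists_lift hF
    simpa using ((ih hP).fwd e').trans (genPathLabel_one_of_tail_eq (hconn _ R.2.1) hP' hq)
  | @bwd _ R _ _ _ e ih =>
    obtain ⟨P, P', hP, hP', e'⟩ := e.exists_lift hF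
    simpa using ((ih hP').bwd e').trans (genPathLabel_one_of_tail_eq (hconn _ R.2.1) hP hq)

end Lift

/-- The group defined by any Rauzy graph of a tree set containing the alphabet, with
respect to any vertex, is the whole free group on `A`. -/
theorem rauzy_pathGroup_eq_top (F : Set (List A)) (hF : IsTreeSet F)
    (hAF : ∀ a : A, [a] ∈ F) (n : ℕ) (vtx : RauzyVertex F n) :
    {g : FreeGroup A | GenPathLabel (RauzyEdge F n) vtx vtx g} = Set.univ := by
  refine Set.eq_univ_of_forall fun g => ?_
  induction n with
  | zero => exact GenPathLabel.of_forall_loop (rauzyEdge_zero_loop hAF vtx) g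
  | succ n ih =>
    have hconn : ∀ w ∈ F, (extensionGraph F w).Preconnected :=
      fun w hw => (hF.2 w hw).connected.preconnected
    have htail : vtx.1.tail ∈ F := hF.1.1 vtx.2.1 (List.tail_suffix _).isInfix
    exact (ih ⟨vtx.1.tail, htail, by simp [vtx.2.2]⟩).lift hF.1 hconn rfl rfl
end

section
/- Let F be a tree set. For each n ≥ 1, the quotient labeled graph G_n/θ_n is isomorphic, as a labeled graph, to the Rauzy graph G_{n−1}. -/
open List

variable {A : Type*}

/-- The generating pairs of the equivalence `θ_n` on the vertices of the Rauzy graph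
`G_n`: `(ax, bx)` for `a, b ∈ L(x)` connected by a path in the extension graph `G(x)`. -/
def thetaBase (F : Set (List A)) (n : ℕ) (p q : RauzyVertex F n) : Prop :=
  ∃ (x : List A) (a b : A) (ha : a ∈ LeftExt F x) (hb : b ∈ LeftExt F x),
    p.1 = a :: x ∧ q.1 = b :: x ∧
      (extensionGraph F x).Reachable (Sum.inl ⟨a, ha⟩) (Sum.inl ⟨b, hb⟩)

/-!
Deleting the first letter maps `G_n` onto `G_{n-1}` (onto because every word of `F` has a left
extension) and sends edges to edges. Two vertices `ax`, `bx` with the same image are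
`θ_n`-equivalent in a single generating step, because the extension graph `G(x)` of a tree set
is connected; so the map induces a bijection `G_n/θ_n ≃ G_{n-1}`. Conversely an edge
`x -a-> y` of `G_{n-1}` lifts to the edge `cx -a-> xa` of `G_n`, for any left extension `c` of
`xa`.
-/

section RauzyQuotient

variable {F : Set (List A)} {n : ℕ}

theorem Biessential.exists_cons_mem (hF : Biessential F) {w : List A} (hw : w ∈ F) :
    ∃ c : A, c :: w ∈ F := by
  obtain ⟨c, b, hcwb⟩ := hF.2 w hw
  exact ⟨c, hF.1 hcwb ⟨[], [b], by simp⟩⟩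

theorem rauzyEdge_iff {x y : RauzyVertex F n} {a : A} :
    RauzyEdge F n x a y ↔ x.1 ++ [a] ∈ F ∧ y.1 = (x.1 ++ [a]).tail := by
  refine and_congr_right fun _ => ⟨?_, fun h => ⟨(x.1 ++ [a]).head (by simp), ?_⟩⟩
  · rintro ⟨b, hb⟩
    simp [hb]
  · rw [h, List.cons_head_tail]

theorem List.tail_tail_append_singleton (l : List A) (a : A) :
    (l ++ [a]).tail.tail = (l.tail ++ [a]).tail := by
  cases l <;> simp

def RauzyVertex.tail (hF : Factorial F) (p : RauzyVertex F n) : RauzyVertex F (n - 1) :=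
  ⟨p.1.tail, hF p.2.1 (List.tail_suffix p.1).isInfix, by simp [p.2.2]⟩

theorem thetaBase.tail_eq (hF : Factorial F) {p q : RauzyVertex F n} (h : thetaBase F n p q) :
    p.tail hF = q.tail hF := by
  obtain ⟨x, a, b, -, -, hp, hq, -⟩ := h
  exact Subtype.ext (by simp [RauzyVertex.tail, hp, hq])

theorem thetaBase_of_tail_eq (hF : Factorial F)
    (hconn : ∀ w ∈ F, (extensionGraph F w).Connected) (hn : 1 ≤ n) {p q : RauzyVertex F n}
    (h : p.tail hF = q.tail hF) : thetaBase F n p q := by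
  obtain ⟨c, x, hp⟩ := List.exists_cons_of_length_eq_add_one (n := n - 1) (l := p.1) (by
    rw [p.2.2]; omega)
  obtain ⟨d, y, hq⟩ := List.exists_cons_of_length_eq_add_one (n := n - 1) (l := q.1) (by
    rw [q.2.2]; omega)
  have hxy : x = y := by simpa [RauzyVertex.tail, hp, hq] using congrArg Subtype.val h
  subst hxy
  have hc : c ∈ LeftExt F x := by simpa [LeftExt, hp] using p.2.1
  have hd : d ∈ LeftExt F x := by simpa [LeftExt, hq] using q.2.1
  have hx : x ∈ F := hF hc (List.suffix_cons c x).isInfix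
  exact ⟨x, c, d, hc, hd, hp, hq, (hconn x hx).preconnected _ _⟩

def thetaQuotTail (hF : Factorial F) : Quot (thetaBase F n) → RauzyVertex F (n - 1) :=
  Quot.lift (RauzyVertex.tail hF) fun _ _ => thetaBase.tail_eq hF

theorem thetaQuotTail_injective (hF : Factorial F)
    (hconn : ∀ w ∈ F, (extensionGraph F w).Connected) (hn : 1 ≤ n) :
    Function.Injective (thetaQuotTail (n := n) hF) := by
  rintro ⟨p⟩ ⟨q⟩ h
  exact Quot.sound (thetaBase_of_tail_eq hF hconn hn h)

def RauzyVertex.cons (hn : 1 ≤ n) (x : RauzyVertex F (n - 1)) (c : A) (hc : c :: x.1 ∈ F) :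
    RauzyVertex F n :=
  ⟨c :: x.1, hc, by simp [x.2.2]; omega⟩

theorem thetaQuotTail_surjective (hF : Biessential F) (hn : 1 ≤ n) :
    Function.Surjective (thetaQuotTail (n := n) hF.1) := by
  intro x
  obtain ⟨c, hc⟩ := hF.exists_cons_mem x.2.1
  exact ⟨Quot.mk _ (RauzyVertex.cons hn x c hc), rfl⟩

theorem RauzyEdge.tail (hF : Factorial F) {p q : RauzyVertex F n} {a : A}
    (h : RauzyEdge F n p a q) : RauzyEdge F (n - 1) (p.tail hF) a (q.tail hF) := by
  rw [rauzyEdge_iff] at h ⊢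
  obtain ⟨hpa, hq⟩ := h
  obtain ⟨s, hs⟩ := List.tail_suffix p.1
  refine ⟨hF hpa ⟨s, [], by
    simp only [RauzyVertex.tail, List.append_nil, ← List.append_assoc, hs]⟩, ?_⟩
  simp only [RauzyVertex.tail, hq, List.tail_tail_append_singleton]

theorem exists_rauzyEdge_of_tail (hF : Biessential F) (hn : 1 ≤ n)
    {x y : RauzyVertex F (n - 1)} {a : A} (h : RauzyEdge F (n - 1) x a y) :
    ∃ p q : RauzyVertex F n, p.tail hF.1 = x ∧ q.tail hF.1 = y ∧ RauzyEdge F n p a q := by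
  rw [rauzyEdge_iff] at h
  obtain ⟨hxa, hy⟩ := h
  obtain ⟨c, hcxa⟩ := hF.exists_cons_mem hxa
  have hcx : c :: x.1 ∈ F := hF.1 hcxa ⟨[], [a], by simp⟩
  refine ⟨RauzyVertex.cons hn x c hcx, ⟨x.1 ++ [a], hxa, by simp [x.2.2]; omega⟩, rfl,
    Subtype.ext hy.symm, rauzyEdge_iff.2 ⟨hcxa, rfl⟩⟩

end RauzyQuotient

/-- For a tree set `F` and `n ≥ 1`, the quotient labeled graph `G_n/θ_n` is isomorphic,
as a labeled graph, to the Rauzy graph `G_{n-1}`. -/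
theorem quotient_rauzy_iso (F : Set (List A)) (hF : IsTreeSet F) (n : ℕ) (hn : 1 ≤ n) :
    ∃ φ : Quot (thetaBase F n) ≃ RauzyVertex F (n - 1),
      ∀ (P Q : Quot (thetaBase F n)) (a : A),
        (∃ p q : RauzyVertex F n,
            Quot.mk (thetaBase F n) p = P ∧ Quot.mk (thetaBase F n) q = Q ∧
              RauzyEdge F n p a q) ↔
          RauzyEdge F (n - 1) (φ P) a (φ Q) := by
  obtain ⟨hbi, htree⟩ := hF
  have hconn : ∀ w ∈ F, (extensionGraph F w).Connected := fun w hw => (htree w hw).connected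
  set φ := Equiv.ofBijective (thetaQuotTail hbi.1)
    ⟨thetaQuotTail_injective hbi.1 hconn hn, thetaQuotTail_surjective hbi hn⟩
  refine ⟨φ, fun P Q a => ⟨?_, fun h => ?_⟩⟩
  · rintro ⟨p, q, rfl, rfl, hpq⟩
    exact hpq.tail hbi.1
  · obtain ⟨p, q, hp, hq, hpq⟩ := exists_rauzyEdge_of_tail hbi hn h
    exact ⟨p, q, φ.injective hp, φ.injective hq, hpq⟩
end

section
/- If F is a tree set containing at least two distinct letters of A (Card(A ∩ F) ≥ 2), then F is not periodic. -/
open List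

variable {A : Type*}

/-!
In a periodic set of period `w`, the letter preceding a factor `x` with `|x| = |w|` is the
last letter of `x`, so no word of length `|w|` is left-special. In a set with connected
extension graphs, a left-special word `x` has a right extension `c` with `xc` left-special:
the path in `G(x)` between two left extensions passes through such a `c`. Starting from
the empty word, which is left-special as soon as two letters occur, this yields left-special
words of every length.
-/

lemma wordPow_append_self (w : List A) (m : ℕ) : wordPow w m ++ w = w ++ wordPow w m := by
  simp only [wordPow]
  rw [← List.flatten_concat, ← List.replicate_succ', List.replicate_succ, List.flatten_cons]

lemma getElem_wordPow_add_length (w : List A) (m k : ℕ)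
    (hk : k + w.length < (wordPow w m).length) :
    (wordPow w m)[k + w.length] = (wordPow w m)[k] := by
  have hpre : wordPow w m <+: w ++ wordPow w m :=
    wordPow_append_self w m ▸ List.prefix_append _ _
  rw [hpre.getElem, List.getElem_append_right (by omega)]
  simp

lemma getElem_add_length_of_infix_wordPow {v w : List A} {m : ℕ} (hv : v <:+: wordPow w m)
    {i : ℕ} (hi : i + w.length < v.length) : v[i + w.length] = v[i] := by
  obtain ⟨s, t, hst⟩ := hv
  have hlen : s.length + v.length + t.length = (wordPow w m).length := by
    rw [← hst, List.length_append, List.length_append]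
  have hget : ∀ j (hj : j < v.length), v[j] = (wordPow w m)[s.length + j] := by
    intro j hj
    simp [← hst, List.getElem_append_left, List.getElem_append_right, hj]
  rw [hget _ hi, hget _ (by omega), ← getElem_wordPow_add_length w m (s.length + i) (by omega)]
  simp only [Nat.add_assoc]

lemma leftExt_subsingleton_of_periodic {F : Set (List A)} {w : List A}
    (hw : F = {v | ∃ n, v <:+: wordPow w n}) {x : List A} (hx : x.length = w.length) :
    (LeftExt F x).Subsingleton := by
  subst hw
  rcases List.eq_nil_or_concat' x with rfl | ⟨x', e, rfl⟩
  · rintro a ⟨n, ha⟩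
    obtain rfl : w = [] := List.length_eq_zero_iff.mp hx.symm
    simp [wordPow] at ha
  · have hlast : ∀ c ∈ LeftExt {v | ∃ n, v <:+: wordPow w n} (x' ++ [e]), c = e := by
      rintro c ⟨n, hc⟩
      have := getElem_add_length_of_infix_wordPow hc (i := 0) (by simp [← hx])
      simpa [← hx] using this.symm
    exact fun a ha b hb => (hlast a ha).trans (hlast b hb).symm

section Connected

lemma bipGraph_exists_shared_neighbor_of_reachable {α β : Type*} {E : α → β → Prop} {a b : α}
    (hreach : (bipGraph E).Reachable (.inl a) (.inl b)) (hab : a ≠ b) :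
    ∃ c a', a' ≠ a ∧ E a c ∧ E a' c := by
  by_contra! H
  -- Otherwise the star of `inl a` is closed under adjacency, so it would contain `inl b`.
  let S : Set (α ⊕ β) := {v | v = .inl a ∨ ∃ c, E a c ∧ v = .inr c}
  have hS : ∀ u v, (bipGraph E).Adj u v → u ∈ S → v ∈ S := by
    rintro u v ⟨a', c, hE, ⟨rfl, rfl⟩ | ⟨rfl, rfl⟩⟩ (hu | ⟨c', hc', hu⟩)
    · obtain rfl := Sum.inl_injective hu
      exact .inr ⟨c, hE, rfl⟩
    · cases hu
    · cases hu
    · obtain rfl := Sum.inr_injective hu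
      by_cases ha' : a' = a
      · exact .inl (congrArg _ ha')
      · exact absurd hE (H c a' ha' hc')
  have hreachS : ∀ v, Relation.ReflTransGen (bipGraph E).Adj (.inl a) v → v ∈ S := by
    intro v hv
    induction hv with
    | refl => exact .inl rfl
    | tail _ hadj ih => exact hS _ _ hadj ih
  rcases hreachS _ ((SimpleGraph.reachable_iff_reflTransGen _ _).1 hreach) with hb | ⟨c, -, hb⟩
  · exact hab (Sum.inl_injective hb).symm
  · cases hb

variable {F : Set (List A)}

lemma exists_leftExt_append_nontrivial {x : List A} (hconn : (extensionGraph F x).Connected)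
    (hx : (LeftExt F x).Nontrivial) : ∃ c, (LeftExt F (x ++ [c])).Nontrivial := by
  obtain ⟨a, ha, b, hb, hab⟩ := hx
  obtain ⟨c, a', ha', hac, ha'c⟩ := bipGraph_exists_shared_neighbor_of_reachable
    (hconn.preconnected (.inl ⟨a, ha⟩) (.inl ⟨b, hb⟩)) (fun h => hab (congrArg Subtype.val h))
  exact ⟨c, a, hac, a', ha'c, fun h => ha' (Subtype.ext h.symm)⟩

lemma exists_length_eq_leftExt_nontrivial (hfact : Factorial F)
    (hconn : ∀ x ∈ F, (extensionGraph F x).Connected) (hnil : (LeftExt F []).Nontrivial)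
    (n : ℕ) : ∃ x : List A, x.length = n ∧ (LeftExt F x).Nontrivial := by
  induction n with
  | zero => exact ⟨[], rfl, hnil⟩
  | succ n ih =>
    obtain ⟨x, rfl, hx⟩ := ih
    obtain ⟨a, ha⟩ := hx.nonempty
    have hxF : x ∈ F := hfact ha (List.suffix_cons a x).isInfix
    obtain ⟨c, hc⟩ := exists_leftExt_append_nontrivial (hconn x hxF) hx
    exact ⟨x ++ [c], by simp, hc⟩

end Connected

/-- A tree set containing at least two distinct letters is not periodic. -/
theorem treeSet_not_periodic (F : Set (List A)) (hF : IsTreeSet F)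
    (h2 : ∃ a b : A, a ≠ b ∧ [a] ∈ F ∧ [b] ∈ F) :
    ¬ Periodic F := by
  rintro ⟨w, hw⟩
  obtain ⟨a, b, hab, ha, hb⟩ := h2
  obtain ⟨x, hx, hspecial⟩ := exists_length_eq_leftExt_nontrivial hF.1.1
    (fun x hx => (hF.2 x hx).connected) ⟨a, ha, b, hb, hab⟩ w.length
  exact hspecial.not_subsingleton (leftExt_subsingleton_of_periodic hw hx)
end

section
/- Let A be an alphabet with exactly three letters and let F be a uniformly recurrent tree set over A with A ⊆ F. Let x ∈ F be a bispecial word of length n, and assume the Rauzy graph G_n of F is of the first infinite type with respect to x and a second special vertex y and words u, v, w, t. Set X = { x v wᵏ : k ≥ 0 }. Let m ≥ 0 be such that z = y wᵐ ∈ F. Then U = Xy⁻¹ ∩ Fz⁻¹ is an Fz⁻¹-maximal suffix code, where Xy⁻¹ = {s ∈ A* : sy ∈ X} and Fz⁻¹ = {s ∈ A* : sz ∈ F}. -/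
open List

variable {A : Type*}

/-! Write `xv = s₀y` and `yw = w'y`, so that `Xy⁻¹ = {s₀w'ᵏ : k ≥ 0}`. Read leftwards from `y`,
the Rauzy graph `G_n` is a lollipop: the loop `w'` at `y` and the path `s₀` coming from `x`,
whose inner vertices are not special, hence have a single left extension. Moreover every edge
into `y` ends the loop or the path: going back from it, uniform recurrence provides a special
vertex, and the last one met starts a path of `G_n` into `y` with non-special inner vertices,
which is `v` or `w`. Hence a word `W` with `Wy ∈ F` either ends with some `s₀w'ᵏ` or is a suffix
of one, and the vertex `x` is met along `s₀w'ᵏ` only at its start; the latter makes the words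
`s₀w'ᵏ` a suffix code. Prolonging `s ∈ Fz⁻¹` to the left until it contains `x` yields a word
ending with both `s` and some `s₀w'ᵏ ∈ U`, so every suffix code in `Fz⁻¹` containing `U` is
`U` itself. -/

theorem wordPow_succ (w : List A) (k : ℕ) : wordPow w (k + 1) = w ++ wordPow w k := by
  simp [wordPow, replicate_succ]

theorem wordPow_succ' (w : List A) (k : ℕ) : wordPow w (k + 1) = wordPow w k ++ w := by
  simp [wordPow, replicate_succ']

theorem wordPow_append_of_append_eq {y w w' : List A} (h : y ++ w = w' ++ y) (k : ℕ) :
    wordPow w' k ++ y = y ++ wordPow w k := by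
  induction k with
  | zero => simp [wordPow]
  | succ k ih => rw [wordPow_succ, wordPow_succ, append_assoc, ih, ← append_assoc, ← h,
      append_assoc]

theorem take_append_of_take_eq {e l q : List A} {n : ℕ} (h : l.take n = q) :
    (e ++ l).take n = (e ++ q).take n := by
  rw [take_append, take_append, ← h, take_take, Nat.min_eq_left (Nat.sub_le _ _)]

theorem exists_cons_suffix_of_suffix_of_ne {l₁ l₂ : List A} (h : l₁ <:+ l₂)
    (hne : l₁ ≠ l₂) : ∃ d, d :: l₁ <:+ l₂ := by
  obtain ⟨t, rfl⟩ := h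
  rcases eq_nil_or_concat t with rfl | ⟨t, d, rfl⟩
  · exact absurd rfl hne
  · exact ⟨d, t, by simp⟩

theorem cons_suffix_append {d : A} {e l₁ l₂ : List A} (h : d :: e <:+ l₁ ++ l₂) :
    d :: e <:+ l₂ ∨ ∃ e₁, d :: e₁ <:+ l₁ ∧ e = e₁ ++ l₂ := by
  obtain ⟨s, hs⟩ := h
  rcases append_eq_append_iff.mp hs with ⟨a, rfl, ha⟩ | ⟨c, rfl, hc⟩
  · cases a with
    | nil => exact .inl (by simp [ha])
    | cons b a =>
      obtain ⟨rfl, rfl⟩ := cons_eq_cons.mp ha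
      exact .inr ⟨a, ⟨s, rfl⟩, rfl⟩
  · exact .inl ⟨c, hc.symm⟩

theorem eq_of_cons_mem_of_not_leftSpecial [Finite A] {F : Set (List A)} {p : List A}
    (hp : ¬ LeftSpecial F p) {a b : A} (ha : a :: p ∈ F) (hb : b :: p ∈ F) : a = b := by
  by_contra hne
  refine hp ?_
  calc 2 = ({a, b} : Set A).ncard := (Set.ncard_pair hne).symm
    _ ≤ (LeftExt F p).ncard := Set.ncard_le_ncard (Set.pair_subset ha hb) (Set.toFinite _)

theorem exists_right_extension {F : Set (List A)} (hR : ∀ w ∈ F, ∃ a : A, w ++ [a] ∈ F)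
    (j : ℕ) {w : List A} (hw : w ∈ F) : ∃ e : List A, e.length = j ∧ w ++ e ∈ F := by
  induction j with
  | zero => exact ⟨[], rfl, by simpa⟩
  | succ j ih =>
    obtain ⟨e, rfl, he⟩ := ih
    obtain ⟨a, ha⟩ := hR _ he
    exact ⟨e ++ [a], by simp, by simpa using ha⟩

theorem Biessential.exists_left_extension {F : Set (List A)} (hF : Biessential F)
    (j : ℕ) {w : List A} (hw : w ∈ F) : ∃ e : List A, e.length = j ∧ e ++ w ∈ F := by
  induction j with
  | zero => exact ⟨[], rfl, by simpa⟩
  | succ j ih =>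
    obtain ⟨e, rfl, he⟩ := ih
    obtain ⟨a, b, hab⟩ := hF.2 _ he
    exact ⟨a :: e, by simp,
      hF.1 hab (by simpa using (prefix_append (a :: (e ++ w)) [b]).isInfix)⟩

theorem UniformlyRecurrent.recurrent {F : Set (List A)} (hF : UniformlyRecurrent F) :
    Recurrent F := by
  refine ⟨hF.1, fun u hu w hw => ?_⟩
  obtain ⟨N, -, hN⟩ := hF.2.2 w hw
  obtain ⟨e, he, hue⟩ := exists_right_extension hF.2.1 N hu
  obtain ⟨g, h, rfl⟩ := hN e (hF.1 hue (suffix_append u e).isInfix) he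
  exact ⟨g, hF.1 hue (by simpa using (prefix_append (u ++ g ++ w) h).isInfix)⟩

theorem IsSuffixCode.isMaximalSuffixCodeIn {S U : Set (List A)} (hU : IsSuffixCode U)
    (hUS : U ⊆ S) (hS : ∀ s ∈ S, ∃ u ∈ U, u <:+ s ∨ s <:+ u) :
    IsMaximalSuffixCodeIn S U := by
  refine ⟨hU, hUS, fun W hW hWS hUW => hUW.antisymm fun s hs => ?_⟩
  obtain ⟨u, hu, hus | hsu⟩ := hS s (hWS hs)
  · rwa [← hW.2 u (hUW hu) s hs hus]
  · rwa [hW.2 s hs u (hUW hu) hsu]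

section RauzyGraph

variable {F : Set (List A)} {n : ℕ}

/-- Reading `l` leftwards from the vertex `q` of `G_n`: after reading a suffix `e` of `l` one is
at the vertex `(e ++ q).take n`, the next letter `d` gives an edge of `G_n` into it, and this
vertex is special only if `e ∈ S`. -/
def IsBackwardTrail (F : Set (List A)) (n : ℕ) (l q : List A) (S : Set (List A)) : Prop :=
  ∀ d e, d :: e <:+ l →
    d :: (e ++ q).take n ∈ F ∧ (SpecialWord F ((e ++ q).take n) → e ∈ S)

theorem IsBackwardTrail.mono {l q : List A} {S S' : Set (List A)}
    (h : IsBackwardTrail F n l q S) (hS : S ⊆ S') : IsBackwardTrail F n l q S' :=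
  fun d e he => (h d e he).imp_right fun hsp hsp' => hS (hsp hsp')

theorem IsBackwardTrail.append {l₁ l₂ q : List A} {S₁ S₂ : Set (List A)}
    (h₁ : IsBackwardTrail F n l₁ q S₁) (h₂ : IsBackwardTrail F n l₂ q S₂)
    (hq : (l₂ ++ q).take n = q) :
    IsBackwardTrail F n (l₁ ++ l₂) q ((· ++ l₂) '' S₁ ∪ S₂) := by
  intro d e he
  rcases cons_suffix_append he with he | ⟨e₁, he₁, rfl⟩
  · exact (h₂.mono Set.subset_union_right) d e he
  · have hv : (e₁ ++ l₂ ++ q).take n = (e₁ ++ q).take n := by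
      rw [append_assoc, take_append_of_take_eq hq]
    rw [hv]
    exact (h₁ d e₁ he₁).imp_right fun hsp hsp' => .inl ⟨e₁, hsp hsp', rfl⟩

theorem NSPath.ne_nil {p q : RauzyVertex F n} {l : List A} (h : NSPath F n p q l) : l ≠ [] := by
  cases h <;> simp

theorem NSPath.exists_isBackwardTrail {p q : RauzyVertex F n} {l : List A}
    (h : NSPath F n p q l) :
    ∃ l₀, p.1 ++ l = l₀ ++ q.1 ∧ l₀ ≠ [] ∧ IsBackwardTrail F n l₀ q.1 {[]} := by
  induction h with
  | @single p q a hpq =>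
    obtain ⟨hpa, b, hb⟩ := hpq
    refine ⟨[b], by simpa using hb, by simp, fun d e hde => ?_⟩
    obtain ⟨rfl, rfl⟩ : d = b ∧ e = [] := by simpa [suffix_cons_iff] using hde
    rw [nil_append, take_of_length_le q.2.2.le, ← hb]
    exact ⟨hpa, fun _ => rfl⟩
  | @cons p q r a l hpq hq _ ih =>
    obtain ⟨hpa, b, hb⟩ := hpq
    obtain ⟨l₀, hl₀, -, htrail⟩ := ih
    have hpl : p.1 ++ a :: l = b :: l₀ ++ r.1 := by
      rw [cons_append, ← hl₀, ← cons_append, ← hb, append_assoc, singleton_append]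
    refine ⟨b :: l₀, hpl, by simp, fun d e hde => ?_⟩
    rcases suffix_cons_iff.mp hde with hde | hde
    · obtain ⟨rfl, rfl⟩ := cons_eq_cons.mp hde
      rw [← hl₀, take_left' q.2.2, ← hb]
      exact ⟨hpa, fun hsp => absurd hsp hq⟩
    · exact htrail d e hde

theorem nsPath_of_append_mem (hF : Factorial F) {l : List A} {p q : RauzyVertex F n}
    (hpl : p.1 ++ l ∈ F) (hl : l ≠ []) (hq : q.1 <:+ p.1 ++ l)
    (hint : ∀ e, e <:+ p.1 ++ l → n < e.length → e.length < (p.1 ++ l).length →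
      ¬ SpecialWord F (e.take n)) :
    NSPath F n p q l := by
  induction l generalizing p with
  | nil => exact absurd rfl hl
  | cons a l ih =>
    have hpa : p.1 ++ [a] ∈ F := hF hpl (by simpa using (prefix_append (p.1 ++ [a]) l).isInfix)
    obtain ⟨b, r, hbr⟩ :=
      exists_cons_of_ne_nil (append_ne_nil_of_right_ne_nil p.1 (cons_ne_nil a []))
    have hrl : r.length = n := by simpa [p.2.2] using (congrArg length hbr).symm
    obtain ⟨q', rfl⟩ : ∃ q' : RauzyVertex F n, q'.1 = r :=
      ⟨⟨r, hF hpa (hbr ▸ (suffix_cons b r).isInfix), hrl⟩, rfl⟩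
    have hedge : RauzyEdge F n p a q' := ⟨hpa, b, hbr⟩
    have hT : p.1 ++ a :: l = b :: (q'.1 ++ l) := by
      rw [← singleton_append, ← append_assoc, hbr, cons_append]
    rw [hT] at hpl hq hint
    rcases eq_or_ne l [] with rfl | hl
    · have hqq' : q.1 <:+ q'.1 :=
        suffix_of_suffix_length_le hq (by simp) (by simp [q.2.2, hrl])
      exact Subtype.ext (hqq'.eq_of_length (by simp [q.2.2, hrl])) ▸ NSPath.single hedge
    · refine NSPath.cons hedge ?_ (ih (hF hpl (suffix_cons b _).isInfix) hl ?_
        fun e he h₁ h₂ => hint e (he.trans (suffix_cons b _)) h₁ (by simp at h₂ ⊢; omega))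
      · simpa [take_left' hrl] using
          hint (q'.1 ++ l) (suffix_cons b _) (by simp [hrl, length_pos_iff.mpr hl]) (by simp)
      · exact suffix_of_suffix_length_le hq (suffix_cons b _) (by simp [q.2.2, hrl])

theorem exists_special_nsPath_of_mem (hF : Factorial F) {M : List A} (hM : M ∈ F)
    (hlen : n < M.length) (hsp : SpecialWord F (M.take n)) (q : RauzyVertex F n)
    (hq : q.1 <:+ M) :
    ∃ (p : RauzyVertex F n) (l : List A),
      SpecialWord F p.1 ∧ p.1 ++ l <:+ M ∧ NSPath F n p q l := by
  -- `T` is the shortest suffix of `M` starting with a special vertex, so none of the inner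
  -- vertices of `T` is special.
  obtain ⟨T, ⟨hTM, hTlen, hTsp⟩, hmin⟩ := (measure length).wf.has_min
    {T | T <:+ M ∧ n < T.length ∧ SpecialWord F (T.take n)} ⟨M, suffix_refl M, hlen, hsp⟩
  have hTF : T ∈ F := hF hM hTM.isInfix
  let p : RauzyVertex F n := ⟨T.take n, hF hTF (take_prefix n T).isInfix, by simp; omega⟩
  have hpT : p.1 ++ T.drop n = T := take_append_drop n T
  refine ⟨p, T.drop n, hTsp, by rwa [hpT], nsPath_of_append_mem hF (by rwa [hpT]) ?_ ?_ ?_⟩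
  · simpa using hTlen
  · rw [hpT]; exact suffix_of_suffix_length_le hq hTM (by rw [q.2.2]; omega)
  · rw [hpT]
    exact fun e he h₁ h₂ hsp' => hmin e ⟨he.trans hTM, h₁, hsp'⟩ h₂

end RauzyGraph

theorem FirstInfiniteType.cons_suffix_of_mem {F : Set (List A)} {n : ℕ}
    (hF : UniformlyRecurrent F) {X Y : RauzyVertex F n} {u v w t : List A}
    (htype : FirstInfiniteType F n X Y u v w t) {b : A} (hb : b :: Y.1 ∈ F) :
    b :: Y.1 <:+ X.1 ++ v ∨ b :: Y.1 <:+ Y.1 ++ w := by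
  -- Going back from the edge `b y` to the last special vertex before it (`x` occurs somewhere
  -- to the left) gives a path of `G_n` into `y` with no special inner vertex: `v` or `w`.
  obtain ⟨hne, hsx, -, hspecial, hpaths⟩ := htype
  obtain ⟨g, hg⟩ := hF.recurrent.2 X.1 X.2.1 _ hb
  have hgX : (X.1 ++ g ++ b :: Y.1).take n = X.1 := by rw [append_assoc, take_left' X.2.2]
  obtain ⟨p, l, hp, hplM, hpath⟩ := exists_special_nsPath_of_mem hF.1 hg
    (by simp [X.2.2]) (hgX.symm ▸ hsx) Y (suffix_append_of_suffix (suffix_cons b _))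
  have hby : b :: Y.1 <:+ p.1 ++ l := suffix_of_suffix_length_le (suffix_append _ _) hplM
    (by simp [p.2.2, Y.2.2, Nat.one_le_iff_ne_zero, hpath.ne_nil])
  rcases hspecial p hp with rfl | rfl
  · obtain rfl : l = v := by
      simpa [hne, Ne.symm hne] using (hpaths _ _ (.inl rfl) (.inr rfl) l).1 hpath
    exact .inl hby
  · obtain rfl : l = w := by
      simpa [hne, Ne.symm hne] using (hpaths _ _ (.inr rfl) (.inr rfl) l).1 hpath
    exact .inr hby

/-- Seen backwards from `y`, the Rauzy graph `G_n` is a lollipop: a path labelled `s₀` from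
the special vertex `x` into a loop labelled `w'` at `y`, and every edge into `y` is the last
edge of one of them. -/
structure IsLollipop (F : Set (List A)) (n : ℕ) (x y s₀ w' : List A) : Prop where
  factorial : Factorial F
  length_x : x.length = n
  length_y : y.length = n
  ne : x ≠ y
  special_x : SpecialWord F x
  trail_path : IsBackwardTrail F n s₀ y {[]}
  trail_loop : IsBackwardTrail F n w' y {[]}
  take_loop : (w' ++ y).take n = y
  edge_into_y : ∀ b, b :: y ∈ F → [b] <:+ s₀ ∨ [b] <:+ w'

theorem FirstInfiniteType.exists_isLollipop {F : Set (List A)} {n : ℕ}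
    (hF : UniformlyRecurrent F) {X Y : RauzyVertex F n} {u v w t : List A}
    (htype : FirstInfiniteType F n X Y u v w t) :
    ∃ s₀ w', s₀ ≠ [] ∧ (∀ k, X.1 ++ v ++ wordPow w k = s₀ ++ wordPow w' k ++ Y.1) ∧
      IsLollipop F n X.1 Y.1 s₀ w' := by
  obtain ⟨s₀, hv, hs₀, hpath⟩ :=
    ((htype.2.2.2.2 X Y (.inl rfl) (.inr rfl) v).2 (by simp)).exists_isBackwardTrail
  obtain ⟨w', hw, -, hloop⟩ :=
    ((htype.2.2.2.2 Y Y (.inr rfl) (.inr rfl) w).2 (by simp)).exists_isBackwardTrail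
  refine ⟨s₀, w', hs₀, fun k => ?_, ⟨hF.1, X.2.2, Y.2.2, fun h => htype.1 (Subtype.ext h),
    htype.2.1, hpath, hloop, by rw [← hw, take_left' Y.2.2], fun b hb => ?_⟩⟩
  · rw [hv, append_assoc, ← wordPow_append_of_append_eq hw, append_assoc]
  · rcases htype.cons_suffix_of_mem hF hb with h | h
    · exact .inl (suffix_append_self_iff.mp (by rwa [singleton_append, ← hv]))
    · exact .inr (suffix_append_self_iff.mp (by rwa [singleton_append, ← hw]))

namespace IsLollipop

variable {F : Set (List A)} {n : ℕ} {x y s₀ w' : List A}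

theorem take_wordPow_append (h : IsLollipop F n x y s₀ w') (c : ℕ) :
    (wordPow w' c ++ y).take n = y := by
  induction c with
  | zero => exact take_of_length_le h.length_y.le
  | succ c ih => rw [wordPow_succ, append_assoc, take_append_of_take_eq ih, h.take_loop]

theorem trail (h : IsLollipop F n x y s₀ w') (k : ℕ) :
    IsBackwardTrail F n (s₀ ++ wordPow w' k) y (Set.range (wordPow w')) := by
  induction k with
  | zero =>
    rw [show wordPow w' 0 = [] from rfl, append_nil]
    exact h.trail_path.mono (by simpa using ⟨0, rfl⟩)
  | succ k ih =>
    rw [wordPow_succ', ← append_assoc]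
    refine (ih.append h.trail_loop h.take_loop).mono ?_
    rintro _ (⟨_, ⟨c, rfl⟩, rfl⟩ | rfl)
    exacts [⟨c + 1, wordPow_succ' w' c⟩, ⟨0, rfl⟩]

theorem eq_of_suffix (h : IsLollipop F n x y s₀ w') {k : ℕ} {W : List A}
    (hW : W <:+ s₀ ++ wordPow w' k) (hx : (W ++ y).take n = x) : W = s₀ ++ wordPow w' k := by
  by_contra hne
  obtain ⟨d, hd⟩ := exists_cons_suffix_of_suffix_of_ne hW hne
  obtain ⟨c, rfl⟩ := ((h.trail k) d W hd).2 (hx ▸ h.special_x)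
  exact h.ne (hx.symm.trans (h.take_wordPow_append c))

theorem exists_cons_suffix [Finite A] (h : IsLollipop F n x y s₀ w') {k : ℕ} {W : List A}
    (hW : W <:+ s₀ ++ wordPow w' k) (hne : W ≠ s₀ ++ wordPow w' k) {a : A}
    (ha : a :: W ++ y ∈ F) : ∃ k', a :: W <:+ s₀ ++ wordPow w' k' := by
  obtain ⟨d, hd⟩ := exists_cons_suffix_of_suffix_of_ne hW hne
  obtain ⟨hdW, hsp⟩ := (h.trail k) d W hd
  have haW : a :: (W ++ y).take n ∈ F := h.factorial ha
    (by simpa using (prefix_append (a :: (W ++ y).take n) ((W ++ y).drop n)).isInfix)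
  -- The vertex reached after `W` is `y`, entered only by the last letters of `s₀` and `w'`,
  -- or it is not special and then `d` is its only left extension.
  by_cases hW : SpecialWord F ((W ++ y).take n)
  · obtain ⟨c, rfl⟩ := hsp hW
    rw [h.take_wordPow_append] at haW
    rcases h.edge_into_y a haW with ha | ha
    · exact ⟨c, by simpa using suffix_append_self_iff.mpr ha⟩
    · exact ⟨c + 1, by simpa [wordPow_succ] using
        suffix_append_of_suffix (suffix_append_self_iff.mpr ha)⟩
  · exact ⟨k, eq_of_cons_mem_of_not_leftSpecial (fun hl => hW (.inl hl)) haW hdW ▸ hd⟩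

theorem suffix_or_suffix [Finite A] (h : IsLollipop F n x y s₀ w') {W : List A}
    (hW : W ++ y ∈ F) :
    (∃ k, s₀ ++ wordPow w' k <:+ W) ∨ ∃ k, W <:+ s₀ ++ wordPow w' k := by
  induction W with
  | nil => exact .inr ⟨0, nil_suffix⟩
  | cons a W ih =>
    rcases ih (h.factorial hW (by simpa using (suffix_cons a (W ++ y)).isInfix)) with
      ⟨k, hk⟩ | ⟨k, hk⟩
    · exact .inl ⟨k, hk.trans (suffix_cons a W)⟩
    · by_cases hne : W = s₀ ++ wordPow w' k
      · exact .inl ⟨k, hne ▸ suffix_cons a W⟩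
      · exact .inr (h.exists_cons_suffix hk hne hW)

theorem exists_suffix_of_infix [Finite A] (h : IsLollipop F n x y s₀ w') {W : List A}
    (hW : W ++ y ∈ F) (hx : x <:+: W) : ∃ k, s₀ ++ wordPow w' k <:+ W := by
  refine (h.suffix_or_suffix hW).elim id fun ⟨k, hk⟩ => ⟨k, ?_⟩
  obtain ⟨α, β, rfl⟩ := hx
  have hxβ : x ++ β <:+ s₀ ++ wordPow w' k := (by simp : x ++ β <:+ α ++ x ++ β).trans hk
  rw [← h.eq_of_suffix hxβ (by rw [append_assoc, take_left' h.length_x])]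
  simp

theorem exists_comparable [Finite A] (h : IsLollipop F n x y s₀ w') (hF : UniformlyRecurrent F)
    (hbi : Biessential F) (hx : x ∈ F) {s r : List A} (hs : s ++ (y ++ r) ∈ F) :
    ∃ k, s₀ ++ wordPow w' k ++ (y ++ r) ∈ F ∧
      (s₀ ++ wordPow w' k <:+ s ∨ s <:+ s₀ ++ wordPow w' k) := by
  obtain ⟨N, -, hN⟩ := hF.2.2 x hx
  obtain ⟨e, he, hes⟩ := hbi.exists_left_extension N hs
  have hesy : e ++ s ++ y ∈ F :=
    h.factorial hes (by simpa using (prefix_append (e ++ s ++ y) r).isInfix)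
  have heF : e ∈ F := h.factorial hes (by simpa using (prefix_append e (s ++ (y ++ r))).isInfix)
  obtain ⟨k, hk⟩ := h.exists_suffix_of_infix hesy ((hN e heF he).trans infix_append_left)
  refine ⟨k, h.factorial hes ?_, suffix_or_suffix_of_suffix hk (suffix_append e s)⟩
  simpa using (suffix_append_self_iff.mpr hk : _ <:+ e ++ s ++ (y ++ r)).isInfix

end IsLollipop

theorem maximal_suffix_code_infinite_case_general [Fintype A]
    (F : Set (List A)) (hUR : UniformlyRecurrent F) (hT : IsTreeSet F)
    (x : List A) (hx : x ∈ F)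
    (y : RauzyVertex F x.length) (u v w t : List A)
    (htype : FirstInfiniteType F x.length ⟨x, hx, rfl⟩ y u v w t)
    (m : ℕ) :
    IsMaximalSuffixCodeIn {s : List A | s ++ (y.1 ++ wordPow w m) ∈ F}
      ({s : List A | s ++ y.1 ∈ {xv : List A | ∃ k : ℕ, xv = x ++ v ++ wordPow w k}} ∩
        {s : List A | s ++ (y.1 ++ wordPow w m) ∈ F}) := by
  obtain ⟨s₀, w', hs₀, hX, hL⟩ := htype.exists_isLollipop hUR
  have hXy : {s : List A | s ++ y.1 ∈ {xv : List A | ∃ k : ℕ, xv = x ++ v ++ wordPow w k}} =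
      Set.range (fun k => s₀ ++ wordPow w' k) := by
    ext s
    simp only [Set.mem_ofPred_eq, hX, append_left_inj, Set.mem_range, eq_comm]
  rw [hXy]
  refine IsSuffixCode.isMaximalSuffixCodeIn ⟨?_, ?_⟩ Set.inter_subset_right fun s hs => ?_
  · rintro _ ⟨⟨k, rfl⟩, -⟩
    simp [hs₀]
  · rintro _ ⟨⟨j, rfl⟩, -⟩ _ ⟨⟨k, rfl⟩, -⟩ hjk
    exact hL.eq_of_suffix hjk (by rw [← hX, append_assoc, take_left' rfl])
  · obtain ⟨k, hk, hcomp⟩ := hL.exists_comparable hUR hT.1 hx hs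
    exact ⟨_, ⟨⟨k, rfl⟩, hk⟩, hcomp⟩

/-- In the first infinite case, with `X = xvw^*` and `z = ywᵐ ∈ F`, the set
`U = Xy⁻¹ ∩ Fz⁻¹` is an `Fz⁻¹`-maximal suffix code. -/
theorem maximal_suffix_code_infinite_case [Fintype A] (hcard : Fintype.card A = 3)
    (F : Set (List A)) (hUR : UniformlyRecurrent F) (hT : IsTreeSet F)
    (hAF : ∀ a : A, [a] ∈ F) (x : List A) (hx : x ∈ F) (hbi : Bispecial F x)
    (y : RauzyVertex F x.length) (u v w t : List A)
    (htype : FirstInfiniteType F x.length ⟨x, hx, rfl⟩ y u v w t)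
    (m : ℕ) (hz : y.1 ++ wordPow w m ∈ F) :
    IsMaximalSuffixCodeIn {s : List A | s ++ (y.1 ++ wordPow w m) ∈ F}
      ({s : List A | s ++ y.1 ∈ {xv : List A | ∃ k : ℕ, xv = x ++ v ++ wordPow w k}} ∩
        {s : List A | s ++ (y.1 ++ wordPow w m) ∈ F}) :=
  maximal_suffix_code_infinite_case_general F hUR hT x hx y u v w t htype m
end
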